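/- Evasion of a single blocked node: for every N ≥ 1 and every blocked set B = {n_b} with 1 ≤ n_b ≤ 4^N−2, an evasion tour exists; that is, the agent can start at node h_N(0), visit every node of the grid except h_N(n_b), end at node h_N(4^N−1), and never have a straight-line segment between consecutive waypoints pass through the interior of the blocked cell. -/

import Mathlib

/-- The `N`-th order approximated Hilbert curve, mapping indices `{0,...,4^N-1}`
to nodes of the grid `{0,...,2^N-1} × {0,...,2^N-1} ⊆ ℤ × ℤ`. -/
def hilbert : ℕ → ℕ → ℤ × ℤ
  | 0, _ => (0, 0)
  | 1, i =>
    if i = 0 then (0, 0)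
    else if i = 1 then (0, 1)
    else if i = 2 then (1, 1)
    else (1, 0)
  | N + 2, i =>
    let q := i / 4 ^ (N + 1)
    let s : ℤ := 2 ^ (N + 1)
    let p := hilbert (N + 1) (i % 4 ^ (N + 1))
    if q = 0 then (p.2, p.1)
    else if q = 1 then (p.1, p.2 + s)
    else if q = 2 then (p.1 + s, p.2 + s)
    else (2 * s - 1 - p.2, s - 1 - p.1)

/-- Euclidean distance between two points of `ℤ × ℤ`. -/
noncomputable def euclDist (a b : ℤ × ℤ) : ℝ :=
  Real.sqrt (((a.1 - b.1 : ℤ) : ℝ) ^ 2 + ((a.2 - b.2 : ℤ) : ℝ) ^ 2)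

/-- Two points of `ℤ × ℤ` are edge connected if their Euclidean distance equals 1. -/
def EdgeConnected (a b : ℤ × ℤ) : Prop := euclDist a b = 1

/-- Two points of `ℤ × ℤ` are vertex connected if both coordinates differ by exactly 1. -/
def VertexConnected (a b : ℤ × ℤ) : Prop := |a.1 - b.1| = 1 ∧ |a.2 - b.2| = 1

/-- Membership in the grid `{0,...,2^N-1} × {0,...,2^N-1}`. -/
def InGrid (N : ℕ) (p : ℤ × ℤ) : Prop :=
  0 ≤ p.1 ∧ p.1 ≤ 2 ^ N - 1 ∧ 0 ≤ p.2 ∧ p.2 ≤ 2 ^ N - 1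

/-- The closed segment from `u` to `v` (centres of cells, viewed in `ℝ²`) is disjoint
from the open unit cell centred at `c`. -/
def SegAvoidsCell (u v c : ℤ × ℤ) : Prop :=
  ∀ t : ℝ, t ∈ Set.Icc (0 : ℝ) 1 →
    ¬ (|(1 - t) * (u.1 : ℝ) + t * (v.1 : ℝ) - (c.1 : ℝ)| < 1 / 2 ∧
       |(1 - t) * (u.2 : ℝ) + t * (v.2 : ℝ) - (c.2 : ℝ)| < 1 / 2)

/-- An evasion tour for the blocked index set `B` on the `N`-th order Hilbert grid:
a sequence of waypoints `w 0, ..., w m` in the grid, starting at the entry node,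
ending at the exit node, avoiding all blocked nodes, covering every unblocked grid
point, and whose straight-line segments avoid the interiors of all blocked cells. -/
def IsEvasionTour (N : ℕ) (B : Finset ℕ) (m : ℕ) (w : ℕ → ℤ × ℤ) : Prop :=
  w 0 = hilbert N 0 ∧
  w m = hilbert N (4 ^ N - 1) ∧
  (∀ j ≤ m, InGrid N (w j)) ∧
  (∀ j ≤ m, ∀ b ∈ B, w j ≠ hilbert N b) ∧
  (∀ p : ℤ × ℤ, InGrid N p → (∀ b ∈ B, p ≠ hilbert N b) → ∃ j ≤ m, w j = p) ∧
  (∀ j < m, ∀ b ∈ B, SegAvoidsCell (w j) (w (j + 1)) (hilbert N b))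

/-!
The blocked node `hilbert N nb` is neither the entry nor the exit node, because the Hilbert curve
is injective on `{0, …, 4^N - 1}` (each quadrant of the order-`N+1` curve is an affine copy of the
order-`N` curve). The grid of side `2^N ≥ 2` with one cell removed stays connected under unit
moves: pick a row and a column avoiding the removed cell; every remaining cell reaches their
crossing along its own row or, if that row is blocked, along its own column. A unit move between
two unblocked cells never enters the open blocked cell, so any walk in this graph from the entry
to the exit that visits every vertex is an evasion tour; such a walk is obtained from
there-and-back excursions to every vertex.
-/

open SimpleGraph

def hilbertQuadrant (q : ℕ) (s : ℤ) (p : ℤ × ℤ) : ℤ × ℤ :=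
  if q = 0 then (p.2, p.1)
  else if q = 1 then (p.1, p.2 + s)
  else if q = 2 then (p.1 + s, p.2 + s)
  else (2 * s - 1 - p.2, s - 1 - p.1)

theorem hilbert_succ (N i : ℕ) :
    hilbert (N + 1) i = hilbertQuadrant (i / 4 ^ N) (2 ^ N) (hilbert N (i % 4 ^ N)) := by
  cases N with
  | zero =>
    -- the order-1 table is the recursion applied to the one-point curve `hilbert 0`
    rcases i with _ | _ | _ | i <;> simp [hilbert, hilbertQuadrant]
  | succ N => rfl

theorem hilbertQuadrant_mem_grid {N q : ℕ} {p : ℤ × ℤ} (hp : InGrid N p) :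
    InGrid (N + 1) (hilbertQuadrant q (2 ^ N) p) := by
  obtain ⟨h1, h2, h3, h4⟩ := hp
  have : (2 : ℤ) ^ (N + 1) = 2 * 2 ^ N := pow_succ' 2 N
  unfold hilbertQuadrant InGrid
  split_ifs <;> dsimp only <;> omega

theorem hilbertQuadrant_inj {N q q' : ℕ} {p p' : ℤ × ℤ} (hq : q < 4) (hq' : q' < 4)
    (hp : InGrid N p) (hp' : InGrid N p')
    (h : hilbertQuadrant q (2 ^ N) p = hilbertQuadrant q' (2 ^ N) p') : q = q' ∧ p = p' := by
  obtain ⟨h1, h2, h3, h4⟩ := hp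
  obtain ⟨h1', h2', h3', h4'⟩ := hp'
  unfold hilbertQuadrant at h
  rw [Prod.ext_iff]
  split_ifs at h <;> simp only [Prod.ext_iff] at h <;> omega

theorem hilbert_mem_grid (N i : ℕ) : InGrid N (hilbert N i) := by
  induction N generalizing i with
  | zero => simp [hilbert, InGrid]
  | succ N ih => rw [hilbert_succ]; exact hilbertQuadrant_mem_grid (ih _)

theorem hilbert_injOn (N : ℕ) : Set.InjOn (hilbert N) (Set.Iio (4 ^ N)) := by
  induction N with
  | zero => intro i hi j hj _; simp_all
  | succ N ih =>
    intro i hi j hj h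
    have h4 : 0 < 4 ^ N := by positivity
    have hq : ∀ k ∈ Set.Iio (4 ^ (N + 1)), k / 4 ^ N < 4 := fun k hk =>
      Nat.div_lt_of_lt_mul (by rw [← pow_succ]; exact hk)
    rw [hilbert_succ, hilbert_succ] at h
    obtain ⟨hqij, hpij⟩ := hilbertQuadrant_inj (hq i hi) (hq j hj) (hilbert_mem_grid _ _)
      (hilbert_mem_grid _ _) h
    have hrij := ih (Nat.mod_lt i h4) (Nat.mod_lt j h4) hpij
    rw [← Nat.div_add_mod i (4 ^ N), ← Nat.div_add_mod j (4 ^ N), hqij, hrij]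

theorem one_le_abs_lerp_sub_int {a b c : ℤ} (hab : |a - b| ≤ 1) (ha : a ≠ c) (hb : b ≠ c)
    {t : ℝ} (ht : t ∈ Set.Icc (0 : ℝ) 1) : 1 ≤ |(1 - t) * a + t * b - c| := by
  obtain ⟨ht0, ht1⟩ := ht
  have hsplit : (c + 1 ≤ a ∧ c + 1 ≤ b) ∨ (a + 1 ≤ c ∧ b + 1 ≤ c) := by
    rw [abs_le] at hab; omega
  have hlerp : (1 - t) * a + t * b - c = (1 - t) * (a - c) + t * (b - c) := by ring
  rw [hlerp, le_abs]
  rcases hsplit with ⟨hac, hbc⟩ | ⟨hac, hbc⟩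
  · have hac' : (1 : ℝ) ≤ a - c := by exact_mod_cast (by omega : 1 ≤ a - c)
    have hbc' : (1 : ℝ) ≤ b - c := by exact_mod_cast (by omega : 1 ≤ b - c)
    left; nlinarith
  · have hac' : (a : ℝ) - c ≤ -1 := by exact_mod_cast (by omega : a - c ≤ -1)
    have hbc' : (b : ℝ) - c ≤ -1 := by exact_mod_cast (by omega : b - c ≤ -1)
    right; nlinarith

theorem segAvoidsCell_of_adj {u v c : ℤ × ℤ} (huv : (hasse ℤ □ hasse ℤ).Adj u v)
    (hu : u ≠ c) (hv : v ≠ c) : SegAvoidsCell u v c := by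
  simp only [boxProd_adj, hasse_adj, Order.covBy_iff_add_one_eq] at huv
  rw [Ne, Prod.ext_iff] at hu hv
  have h1 : |u.1 - v.1| ≤ 1 := by rw [abs_le]; omega
  have h2 : |u.2 - v.2| ≤ 1 := by rw [abs_le]; omega
  intro t ht ⟨ht1, ht2⟩
  by_cases hc : u.1 ≠ c.1 ∧ v.1 ≠ c.1
  · linarith [one_le_abs_lerp_sub_int h1 hc.1 hc.2 ht]
  · have hu2 : u.2 ≠ c.2 := by omega
    have hv2 : v.2 ≠ c.2 := by omega
    linarith [one_le_abs_lerp_sub_int h2 hu2 hv2 ht]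

theorem SimpleGraph.induce_reachable_of_adj_succ {V : Type*} {G : SimpleGraph V} {s : Set V}
    (f : ℤ → V) (hadj : ∀ i, G.Adj (f i) (f (i + 1))) {a b : ℤ}
    (hs : ∀ i ∈ Set.uIcc a b, f i ∈ s) {u v : s} (hu : f a = u) (hv : f b = v) :
    (G.induce s).Reachable u v := by
  wlog hab : a ≤ b generalizing a b u v
  · exact (this (Set.uIcc_comm a b ▸ hs) hv hu (le_of_not_ge hab)).symm
  induction b, hab using Int.leInduction generalizing v with
  | base => exact Subtype.ext (hu.symm.trans hv) ▸ .rfl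
  | succ b hab ih =>
    have hb : f b ∈ s := hs b (Set.mem_uIcc.2 (Or.inl ⟨hab, by omega⟩))
    refine (ih (fun i hi => hs i ?_) (v := ⟨f b, hb⟩) rfl).trans (Adj.reachable ?_)
    · rw [Set.mem_uIcc] at hi ⊢; omega
    · rw [induce_adj, ← hv]; exact hadj b

theorem SimpleGraph.Preconnected.exists_walk_forall_mem_support {V : Type*} [Finite V]
    {G : SimpleGraph V} (hG : G.Preconnected) (u v : V) :
    ∃ p : G.Walk u v, ∀ x, x ∈ p.support := by
  have : Fintype V := Fintype.ofFinite V
  classical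
  have hloop : ∀ s : Finset V, ∃ p : G.Walk u u, ∀ x ∈ s, x ∈ p.support := by
    intro s
    induction s using Finset.induction_on with
    | empty => exact ⟨.nil, by simp⟩
    | insert x s _ ih =>
      obtain ⟨p, hp⟩ := ih
      obtain ⟨q⟩ := hG u x
      refine ⟨(q.append q.reverse).append p, fun y hy => ?_⟩
      rw [Walk.mem_support_append_iff, Walk.mem_support_append_iff]
      rcases Finset.mem_insert.1 hy with rfl | hy
      · exact Or.inl (Or.inl q.end_mem_support)
      · exact Or.inr (hp y hy)
  obtain ⟨p, hp⟩ := hloop Finset.univ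
  obtain ⟨q⟩ := hG u v
  exact ⟨p.append q, fun x =>
    (Walk.mem_support_append_iff _ _).2 (Or.inl (hp x (Finset.mem_univ x)))⟩

theorem finite_setOf_inGrid (N : ℕ) : {p : ℤ × ℤ | InGrid N p}.Finite :=
  ((Set.finite_Icc 0 (2 ^ N - 1)).prod (Set.finite_Icc 0 (2 ^ N - 1))).subset
    fun _ ⟨h1, h2, h3, h4⟩ => ⟨⟨h1, h2⟩, ⟨h3, h4⟩⟩

noncomputable def puncturedGrid (N : ℕ) (c : ℤ × ℤ) :
    SimpleGraph {p : ℤ × ℤ | InGrid N p ∧ p ≠ c} :=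
  (hasse ℤ □ hasse ℤ).induce {p | InGrid N p ∧ p ≠ c}

section puncturedGrid

variable {N : ℕ} {c : ℤ × ℤ}

theorem puncturedGrid_reachable_of_snd_eq {p q : {p : ℤ × ℤ | InGrid N p ∧ p ≠ c}}
    (hpq : p.1.2 = q.1.2) (hpc : p.1.2 ≠ c.2) : (puncturedGrid N c).Reachable p q := by
  refine induce_reachable_of_adj_succ (fun i => (i, p.1.2))
    (fun i => boxProd_adj_left.2 (hasse_adj.2 (Or.inl (Order.covBy_add_one i))))
    (a := p.1.1) (b := q.1.1) (fun i hi => ?_) rfl (Prod.ext rfl hpq)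
  obtain ⟨⟨_, _, _, _⟩, _⟩ := p.2
  obtain ⟨⟨_, _, _, _⟩, _⟩ := q.2
  rw [Set.mem_uIcc] at hi
  exact ⟨⟨by omega, by omega, by omega, by omega⟩, fun h => hpc (Prod.ext_iff.1 h).2⟩

theorem puncturedGrid_reachable_of_fst_eq {p q : {p : ℤ × ℤ | InGrid N p ∧ p ≠ c}}
    (hpq : p.1.1 = q.1.1) (hpc : p.1.1 ≠ c.1) : (puncturedGrid N c).Reachable p q := by
  refine induce_reachable_of_adj_succ (fun i => (p.1.1, i))
    (fun i => boxProd_adj_right.2 (hasse_adj.2 (Or.inl (Order.covBy_add_one i))))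
    (a := p.1.2) (b := q.1.2) (fun i hi => ?_) rfl (Prod.ext hpq rfl)
  obtain ⟨⟨_, _, _, _⟩, _⟩ := p.2
  obtain ⟨⟨_, _, _, _⟩, _⟩ := q.2
  rw [Set.mem_uIcc] at hi
  exact ⟨⟨by omega, by omega, by omega, by omega⟩, fun h => hpc (Prod.ext_iff.1 h).1⟩

end puncturedGrid

theorem puncturedGrid_preconnected {N : ℕ} (hN : 1 ≤ N) (c : ℤ × ℤ) :
    (puncturedGrid N c).Preconnected := by
  have hn : (2 : ℤ) ≤ 2 ^ N := le_self_pow₀ (by norm_num) (by omega)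
  obtain ⟨x₀, hx₀, hx₀c⟩ : ∃ x₀ : ℤ, (x₀ = 0 ∨ x₀ = 1) ∧ x₀ ≠ c.1 :=
    ⟨if c.1 = 0 then 1 else 0, by split_ifs <;> omega⟩
  obtain ⟨y₀, hy₀, hy₀c⟩ : ∃ y₀ : ℤ, (y₀ = 0 ∨ y₀ = 1) ∧ y₀ ≠ c.2 :=
    ⟨if c.2 = 0 then 1 else 0, by split_ifs <;> omega⟩
  let hub : {p : ℤ × ℤ | InGrid N p ∧ p ≠ c} :=
    ⟨(x₀, y₀), ⟨by omega, by omega, by omega, by omega⟩, fun h => hx₀c (Prod.ext_iff.1 h).1⟩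
  have reachable_hub : ∀ p, (puncturedGrid N c).Reachable p hub := by
    rintro ⟨⟨x, y⟩, hp⟩
    have ⟨⟨hx, hx', hy, hy'⟩, hpc⟩ := hp
    by_cases hyc : y = c.2
    · have hxc : x ≠ c.1 := fun hxc => hpc (Prod.ext hxc hyc)
      let q : {p : ℤ × ℤ | InGrid N p ∧ p ≠ c} :=
        ⟨(x, y₀), ⟨hx, hx', by omega, by omega⟩, fun h => hxc (Prod.ext_iff.1 h).1⟩
      exact (puncturedGrid_reachable_of_fst_eq (p := ⟨(x, y), hp⟩) (q := q) rfl hxc).trans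
        (puncturedGrid_reachable_of_snd_eq rfl hy₀c)
    · let q : {p : ℤ × ℤ | InGrid N p ∧ p ≠ c} :=
        ⟨(x₀, y), ⟨by omega, by omega, hy, hy'⟩, fun h => hyc (Prod.ext_iff.1 h).2⟩
      exact (puncturedGrid_reachable_of_snd_eq (p := ⟨(x, y), hp⟩) (q := q) rfl hyc).trans
        (puncturedGrid_reachable_of_fst_eq rfl hx₀c)
  exact fun p q => (reachable_hub p).trans (reachable_hub q).symm

theorem exists_isEvasionTour_singleton {N nb : ℕ} (hN : 1 ≤ N)
    (h0 : hilbert N nb ≠ hilbert N 0) (hlast : hilbert N nb ≠ hilbert N (4 ^ N - 1)) :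
    ∃ (m : ℕ) (w : ℕ → ℤ × ℤ), IsEvasionTour N {nb} m w := by
  set c := hilbert N nb
  have : Finite {p : ℤ × ℤ | InGrid N p ∧ p ≠ c} :=
    ((finite_setOf_inGrid N).subset fun _ hp => hp.1).to_subtype
  let start : {p : ℤ × ℤ | InGrid N p ∧ p ≠ c} := ⟨hilbert N 0, hilbert_mem_grid N 0, h0.symm⟩
  let finish : {p : ℤ × ℤ | InGrid N p ∧ p ≠ c} :=
    ⟨hilbert N (4 ^ N - 1), hilbert_mem_grid N _, hlast.symm⟩
  obtain ⟨p, hp⟩ := (puncturedGrid_preconnected hN c).exists_walk_forall_mem_support start finish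
  refine ⟨p.length, fun j => (p.getVert j).1, congrArg Subtype.val p.getVert_zero,
    congrArg Subtype.val p.getVert_length,
    fun j _ => (p.getVert j).2.1, ?_, ?_, ?_⟩
  · intro j _ b hb
    rw [Finset.mem_singleton.1 hb]
    exact (p.getVert j).2.2
  · intro q hq hqc
    obtain ⟨j, hj, hjm⟩ :=
      Walk.mem_support_iff_exists_getVert.1 (hp ⟨q, hq, hqc nb (Finset.mem_singleton_self nb)⟩)
    exact ⟨j, hjm, congrArg Subtype.val hj⟩
  · intro j hj b hb
    rw [Finset.mem_singleton.1 hb]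
    exact segAvoidsCell_of_adj (p.adj_getVert_succ hj) (p.getVert j).2.2 (p.getVert (j + 1)).2.2

theorem hilbert_evade_single_blocked (N nb : ℕ) (hN : 1 ≤ N) (h1 : 1 ≤ nb)
    (h2 : nb ≤ 4 ^ N - 2) :
    ∃ (m : ℕ) (w : ℕ → ℤ × ℤ), IsEvasionTour N {nb} m w := by
  have h4 : 4 ≤ 4 ^ N := le_self_pow₀ (by norm_num) (by omega)
  have hne : ∀ i < 4 ^ N, i ≠ nb → hilbert N nb ≠ hilbert N i := fun i hi hin h =>
    hin (hilbert_injOn N (show nb < 4 ^ N by omega) hi h).symm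
  exact exists_isEvasionTour_singleton hN (hne 0 (by omega) (by omega))
    (hne _ (by omega) (by omega))
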